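/- The conditional importance sampling (CIS) kernel leaves the posterior invariant in the discrete case: on a finite state space, if the current state z[k−1] is distributed according to p(·|x), then after setting z¹ = z[k−1], drawing z²,…,z^S i.i.d. from q, computing weights w^i = p(z^i, x)/q(z^i), and selecting z[k] = z^J with P(J = j) ∝ w^j, the new state z[k] is also distributed according to p(·|x). -/
import Mathlib


/-- The conditional importance sampling (CIS) kernel leaves the posterior invariant on a finite
state space. With unnormalized target `γ(z) = p(z,x) > 0`, posterior
`post z = γ z / Σ γ`, proposal `q > 0`, and `S ≥ 1` samples: retain the conditional sample at
index `0`, draw the other `S - 1` samples i.i.d. from `q`, weight all `S` samples by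
`w(z) = γ(z)/q(z)`, and resample the new state with probabilities proportional to the weights.
If the current state is distributed according to `post`, so is the new state. -/
theorem cis_kernel_posterior_invariant
    (Z : Type*) [Fintype Z] [DecidableEq Z]
    (γ q : Z → ℝ)
    (hγ : ∀ z, 0 < γ z) (hq : ∀ z, 0 < q z)
    (hqsum : ∑ z, q z = 1)
    (S : ℕ) [NeZero S]
    (post : Z → ℝ) (hpost : ∀ z, post z = γ z / ∑ z', γ z')
    (w : Z → ℝ) (hw : ∀ z, w z = γ z / q z)
    (M : Z → Z → ℝ)
    (hM : ∀ z z', M z z' =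
      ∑ t : Fin S → Z,
        (if t 0 = z then
          (∏ i ∈ Finset.univ.erase (0 : Fin S), q (t i)) *
            (∑ j : Fin S, if t j = z' then w (t j) / (∑ r : Fin S, w (t r)) else 0)
        else 0)) :
    ∀ z', ∑ z, post z * M z z' = post z' := by
  classical
  intro z'
  have hΓpos : 0 < ∑ z'', γ z'' :=
    Finset.sum_pos (fun z _ => hγ z) ⟨z', Finset.mem_univ z'⟩
  have hwpos : ∀ z, 0 < w z := fun z => by
    rw [hw]; exact div_pos (hγ z) (hq z)
  have hWpos : ∀ t : Fin S → Z, 0 < ∑ r : Fin S, w (t r) := fun t =>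
    Finset.sum_pos (fun r _ => hwpos _) ⟨0, Finset.mem_univ _⟩
  set Γ := ∑ z'', γ z'' with hΓdef
  have hγwq : ∀ z, γ z = w z * q z := fun z => by
    rw [hw]; exact (div_mul_cancel₀ (γ z) (hq z).ne').symm
  set F : (Fin S → Z) → Fin S → ℝ := fun t j =>
    (∏ i, q (t i)) * (if t j = z' then w (t 0) * w (t j) / (∑ r, w (t r)) else 0) with hF
  set G : (Fin S → Z) → Fin S → ℝ := fun t j =>
    (∏ i, q (t i)) * (if t 0 = z' then w (t 0) * w (t j) / (∑ r, w (t r)) else 0) with hG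
  -- Step A
  have stepA : ∑ z, post z * M z z' = (1/Γ) * ∑ t : Fin S → Z, ∑ j : Fin S, F t j := by
    simp only [hM, Finset.mul_sum]
    rw [Finset.sum_comm]
    refine Finset.sum_congr rfl fun t _ => ?_
    simp only [mul_ite, mul_zero]
    rw [Finset.sum_ite_eq]
    simp only [Finset.mem_univ, if_true]
    simp only [Finset.mul_sum]
    refine Finset.sum_congr rfl fun j _ => ?_
    simp only [hF]
    rcases eq_or_ne (t j) z' with h | h
    · simp only [h, eq_self_iff_true, if_true]
      rw [hpost, hγwq (t 0),
        ← Finset.mul_prod_erase Finset.univ (fun i => q (t i)) (Finset.mem_univ (0 : Fin S))]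
      ring
    · simp [h]
  -- Step B: swap symmetry
  have stepB : ∀ j : Fin S, (∑ t : Fin S → Z, F t j) = ∑ t : Fin S → Z, G t j := by
    intro j
    set σ := Equiv.swap (0 : Fin S) j with hσ
    have hbij : Function.Bijective (fun t : Fin S → Z => t ∘ σ) := by
      constructor
      · intro a b h
        funext i
        have h2 := congrFun h (σ.symm i)
        simpa using h2
      · intro b
        exact ⟨b ∘ ⇑σ.symm, by funext i; simp⟩
    refine Fintype.sum_bijective _ hbij _ _ fun t => ?_
    have h0 : σ 0 = j := Equiv.swap_apply_left 0 j
    have hj : σ j = 0 := Equiv.swap_apply_right 0 j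
    have hprod : (∏ i, q ((t ∘ σ) i)) = ∏ i, q (t i) := by
      simpa using Equiv.prod_comp σ (fun i => q (t i))
    have hsum : (∑ r, w ((t ∘ σ) r)) = ∑ r, w (t r) := by
      simpa using Equiv.sum_comp σ (fun r => w (t r))
    simp only [hF, hG, Function.comp_apply] at hprod hsum ⊢
    rw [hprod, hsum, h0, hj]
    split_ifs with h
    · ring
    · rfl
  -- Step C: collapse the j-sum
  have stepC : ∑ t : Fin S → Z, ∑ j : Fin S, G t j
      = ∑ t : Fin S → Z, (if t 0 = z' then (∏ i, q (t i)) * w (t 0) else 0) := by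
    refine Finset.sum_congr rfl fun t _ => ?_
    simp only [hG]
    rcases eq_or_ne (t 0) z' with h | h
    · simp only [h, eq_self_iff_true, if_true]
      calc ∑ j : Fin S, (∏ i, q (t i)) * (w z' * w (t j) / ∑ r : Fin S, w (t r))
          = ((∏ i, q (t i)) * w z' / ∑ r : Fin S, w (t r)) * ∑ j : Fin S, w (t j) := by
            rw [Finset.mul_sum]
            exact Finset.sum_congr rfl fun j _ => by ring
        _ = (∏ i, q (t i)) * w z' := div_mul_cancel₀ _ (hWpos t).ne'
    · simp [h]
  -- auxiliary: expected value of the erased product is 1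
  have hE : ∑ t : Fin S → Z,
      (if t 0 = z' then ∏ i ∈ Finset.univ.erase (0 : Fin S), q (t i) else 0) = 1 := by
    set f : Fin S → Z → ℝ := fun i z => if i = 0 then (if z = z' then 1 else 0) else q z with hf
    have h1 : ∀ t : Fin S → Z,
        (if t 0 = z' then ∏ i ∈ Finset.univ.erase (0 : Fin S), q (t i) else 0)
          = ∏ i : Fin S, f i (t i) := by
      intro t
      rw [← Finset.mul_prod_erase Finset.univ (fun i => f i (t i)) (Finset.mem_univ (0 : Fin S))]
      have h2 : ∏ i ∈ Finset.univ.erase (0 : Fin S), f i (t i)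
          = ∏ i ∈ Finset.univ.erase (0 : Fin S), q (t i) :=
        Finset.prod_congr rfl fun i hi => by
          simp only [hf]
          rw [if_neg (Finset.mem_erase.mp hi).1]
      have h3 : f 0 (t 0) = if t 0 = z' then (1:ℝ) else 0 := by simp [hf]
      rw [h2, h3]
      split_ifs with h
      · rw [one_mul]
      · rw [zero_mul]
    calc ∑ t : Fin S → Z,
          (if t 0 = z' then ∏ i ∈ Finset.univ.erase (0 : Fin S), q (t i) else 0)
        = ∑ t : Fin S → Z, ∏ i : Fin S, f i (t i) := Finset.sum_congr rfl fun t _ => h1 t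
      _ = ∑ t ∈ Fintype.piFinset (fun _ : Fin S => (Finset.univ : Finset Z)),
            ∏ i : Fin S, f i (t i) := by rw [Fintype.piFinset_univ]
      _ = ∏ i : Fin S, ∑ z, f i z := (Finset.prod_univ_sum _ _).symm
      _ = 1 := by
          rw [← Finset.mul_prod_erase Finset.univ (fun i => ∑ z, f i z)
            (Finset.mem_univ (0 : Fin S))]
          have e1 : ∑ z, f 0 z = 1 := by
            have : ∀ z : Z, f 0 z = if z = z' then (1:ℝ) else 0 := fun z => by simp [hf]
            simp only [this]
            rw [Finset.sum_ite_eq' Finset.univ z' (fun _ => (1:ℝ))]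
            simp
          have e2 : ∏ i ∈ Finset.univ.erase (0 : Fin S), ∑ z, f i z = 1 :=
            Finset.prod_eq_one fun i hi => by
              have hi' := (Finset.mem_erase.mp hi).1
              simp [hf, hi', hqsum]
          rw [e1, e2, mul_one]
  -- Step D
  have stepD : ∑ t : Fin S → Z, (if t 0 = z' then (∏ i, q (t i)) * w (t 0) else 0) = γ z' := by
    have h1 : ∀ t : Fin S → Z, (if t 0 = z' then (∏ i, q (t i)) * w (t 0) else 0)
        = γ z' * (if t 0 = z' then ∏ i ∈ Finset.univ.erase (0 : Fin S), q (t i) else 0) := by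
      intro t
      split_ifs with h
      · rw [← Finset.mul_prod_erase Finset.univ (fun i => q (t i)) (Finset.mem_univ (0 : Fin S)),
          h, hγwq z']
        ring
      · rw [mul_zero]
    rw [Finset.sum_congr rfl fun t _ => h1 t, ← Finset.mul_sum, hE, mul_one]
  rw [stepA, Finset.sum_comm, Finset.sum_congr rfl fun j _ => stepB j, Finset.sum_comm,
    stepC, stepD, hpost]
  ring
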